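/- Let f ∈ ℂ[X] be a nonzero polynomial, n ∈ ℕ, and let φ_0, …, φ_n ∈ ℂ[X] be polynomials with deg φ_k = k for each k and ⟨φ_j · f, φ_k · f⟩ = δ_{jk} (Kronecker delta) for all 0 ≤ j, k ≤ n. Then the degree-n OPA p_n to 1/f satisfies p_n = conj(f(0)) · ∑_{k=0}^n conj(φ_k(0)) · φ_k. -/

import Mathlib

open Polynomial

/-- The H² inner product of two polynomials: `⟨g, h⟩ = ∑ₖ gₖ conj(hₖ)`. -/
noncomputable def hinner (g h : Polynomial ℂ) : ℂ :=
  ∑ᶠ k : ℕ, g.coeff k * (starRingEnd ℂ) (h.coeff k)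

/-- The squared H² norm of a polynomial: `‖g‖² = ∑ₖ |gₖ|²`. -/
noncomputable def hnormSq (g : Polynomial ℂ) : ℝ :=
  ∑ᶠ k : ℕ, ‖g.coeff k‖ ^ 2

/-- `p` is the degree-`n` optimal polynomial approximant (OPA) to `1/f` in H². -/
def IsOPA (f : Polynomial ℂ) (n : ℕ) (p : Polynomial ℂ) : Prop :=
  p.degree ≤ (n : ℕ) ∧
    ∀ q : Polynomial ℂ, q.degree ≤ (n : ℕ) → hnormSq (1 - p * f) ≤ hnormSq (1 - q * f)

/-!
Identify a polynomial with its coefficient sequence in `ℓ²(ℕ)`, and let `𝒫ₙ` be the polynomials of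
degree `≤ n`. The vectors `φₖ f` are orthonormal and span `f · 𝒫ₙ`, so the orthogonal projection of
`1` onto `f · 𝒫ₙ` is `∑ₖ ⟨1, φₖ f⟩ φₖ f = ∑ₖ conj (f(0) φₖ(0)) φₖ f = P f`, with `P` the kernel sum.
As `1 - P f` is orthogonal to `f · 𝒫ₙ`, Pythagoras gives `‖1 - q f‖² = ‖1 - P f‖² + ‖(P - q) f‖²`
for `q ∈ 𝒫ₙ`, so the minimiser `p` has `p f = P f`, and `p = P` because `f ≠ 0`.
-/

section InnerProductSpace

variable {𝕜 E : Type*} [RCLike 𝕜] [NormedAddCommGroup E] [InnerProductSpace 𝕜 E]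

lemma eq_of_inner_sub_eq_zero_of_norm_sub_sq_le {x y u : E} (horth : inner 𝕜 (y - u) (x - y) = 0)
    (hle : ‖x - u‖ ^ 2 ≤ ‖x - y‖ ^ 2) : u = y := by
  have hpyth : ‖x - u‖ ^ 2 = ‖x - y‖ ^ 2 + ‖y - u‖ ^ 2 := by
    rw [← sub_add_sub_cancel x y u, @norm_add_sq 𝕜, ← inner_conj_symm, horth]
    simp
  have : ‖y - u‖ = 0 := by nlinarith [norm_nonneg (y - u)]
  exact (sub_eq_zero.mp (norm_eq_zero.mp this)).symm

lemma inner_sub_sum_inner_smul_eq_zero {ι : Type*} [DecidableEq ι] {e : ι → E} {s : Finset ι}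
    (he : ∀ j ∈ s, ∀ k ∈ s, inner 𝕜 (e j) (e k) = if j = k then 1 else 0) (x : E) {j : ι}
    (hj : j ∈ s) : inner 𝕜 (e j) (x - ∑ k ∈ s, inner 𝕜 (e k) x • e k) = 0 := by
  rw [inner_sub_right, inner_sum, Finset.sum_congr rfl fun k hk => by
    rw [inner_smul_right, he j hj k hk]]
  simp [hj]

end InnerProductSpace

namespace Polynomial

lemma span_image_Iic_eq_degreeLE {K : Type*} [Field K] {n : ℕ} {φ : ℕ → K[X]}
    (hdeg : ∀ k ≤ n, (φ k).degree = k) :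
    Submodule.span K (φ '' Set.Iic n) = degreeLE K n := by
  let S : Sequence K := ⟨fun k => if k ≤ n then φ k else X ^ k, fun k => by
    split_ifs with hk
    exacts [hdeg k hk, degree_X_pow k]⟩
  have hS : S '' Set.Iic n = φ '' Set.Iic n := Set.image_congr fun k hk => if_pos hk
  rw [← hS, S.span_degreeLE fun k _ => (leadingCoeff_ne_zero.mpr (S.ne_zero k)).isUnit]

lemma hasFiniteSupport_coeff {R : Type*} [Semiring R] (g : R[X]) :
    Function.HasFiniteSupport g.coeff :=
  g.support.finite_toSet.subset fun _ hk => mem_support_iff.mpr hk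

noncomputable def coeffLp : ℂ[X] →ₗ[ℂ] lp (fun _ : ℕ => ℂ) 2 where
  toFun g := ⟨g.coeff, (memℓp_zero g.hasFiniteSupport_coeff).of_exponent_ge bot_le⟩
  map_add' g h := lp.ext (_root_.funext (coeff_add g h))
  map_smul' c g := lp.ext (_root_.funext (coeff_smul c g))

@[simp] lemma coeffLp_apply (g : ℂ[X]) (k : ℕ) : coeffLp g k = g.coeff k := rfl

lemma coeffLp_injective : Function.Injective coeffLp := fun _ _ hgh =>
  Polynomial.ext fun k => congrArg (fun v : lp (fun _ : ℕ => ℂ) 2 => v k) hgh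

lemma inner_coeffLp (g h : ℂ[X]) : inner ℂ (coeffLp g) (coeffLp h) = hinner h g := by
  rw [lp.inner_eq_tsum, tsum_eq_finsum, hinner]
  · simp
  · exact h.hasFiniteSupport_coeff.subset <|
    Function.support_subset_iff'.mpr fun k hk => by simp [Function.notMem_support.mp hk]

lemma norm_coeffLp_sq (g : ℂ[X]) : ‖coeffLp g‖ ^ 2 = hnormSq g := by
  have := lp.norm_rpow_eq_tsum (p := 2) (by norm_num) (coeffLp g)
  simp only [ENNReal.toReal_ofNat, Real.rpow_two, coeffLp_apply] at this
  rw [this, tsum_eq_finsum, hnormSq]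
  exact g.hasFiniteSupport_coeff.subset <|
    Function.support_subset_iff'.mpr fun k hk => by simp [Function.notMem_support.mp hk]

lemma hinner_one_left (g : ℂ[X]) : hinner 1 g = starRingEnd ℂ (g.coeff 0) := by
  rw [hinner, finsum_eq_single _ 0 fun k hk => by simp [coeff_one, hk]]
  simp

lemma inner_coeffLp_mul_eq_zero_of_mem_degreeLE {n : ℕ} {φ : ℕ → ℂ[X]}
    (hdeg : ∀ k ≤ n, (φ k).degree = k) {f : ℂ[X]} {w : lp (fun _ : ℕ => ℂ) 2}
    (hw : ∀ k ≤ n, inner ℂ (coeffLp (φ k * f)) w = 0) {q : ℂ[X]} (hq : q ∈ degreeLE ℂ n) :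
    inner ℂ (coeffLp (q * f)) w = 0 := by
  rw [← span_image_Iic_eq_degreeLE hdeg] at hq
  suffices h : Submodule.span ℂ (φ '' Set.Iic n) ≤
      (ℂ ∙ w)ᗮ.comap (coeffLp ∘ₗ LinearMap.mulRight ℂ f) from
    Submodule.mem_orthogonal_singleton_iff_inner_left.mp (h hq)
  rw [Submodule.span_le]
  rintro _ ⟨k, hk, rfl⟩
  exact Submodule.mem_orthogonal_singleton_iff_inner_left.mpr (hw k hk)

end Polynomial

theorem opa_eq_kernel_sum (f : Polynomial ℂ) (hf : f ≠ 0) (n : ℕ)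
    (φ : ℕ → Polynomial ℂ) (hdeg : ∀ k ≤ n, (φ k).degree = (k : ℕ))
    (horth : ∀ j ≤ n, ∀ k ≤ n,
      hinner (φ j * f) (φ k * f) = if j = k then 1 else 0)
    (p : Polynomial ℂ) (hp : IsOPA f n p) :
    p = Polynomial.C ((starRingEnd ℂ) (f.eval 0)) *
      ∑ k ∈ Finset.range (n + 1), Polynomial.C ((starRingEnd ℂ) ((φ k).eval 0)) * φ k := by
  set P := C ((starRingEnd ℂ) (f.eval 0)) *
    ∑ k ∈ Finset.range (n + 1), C ((starRingEnd ℂ) ((φ k).eval 0)) * φ k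
  set e : ℕ → lp (fun _ : ℕ => ℂ) 2 := fun k => coeffLp (φ k * f)
  have he : ∀ j ∈ Finset.range (n + 1), ∀ k ∈ Finset.range (n + 1),
      inner ℂ (e j) (e k) = if j = k then 1 else 0 := by
    intro j hj k hk
    rw [inner_coeffLp,
      horth k (Finset.mem_range_succ_iff.mp hk) j (Finset.mem_range_succ_iff.mp hj)]
    exact if_congr eq_comm rfl rfl
  have hcoeff : ∀ k, inner ℂ (e k) (coeffLp 1) =
      (starRingEnd ℂ) (f.eval 0) * (starRingEnd ℂ) ((φ k).eval 0) := fun k => by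
    rw [inner_coeffLp, hinner_one_left, mul_coeff_zero, map_mul, coeff_zero_eq_eval_zero,
      coeff_zero_eq_eval_zero, mul_comm]
  have hPf_sum :
      coeffLp (P * f) = ∑ k ∈ Finset.range (n + 1), inner ℂ (e k) (coeffLp 1) • e k := by
    simp only [hcoeff, e, P, Finset.mul_sum, Finset.sum_mul, map_sum, ← map_smul, smul_eq_C_mul,
      C_mul, mul_assoc]
  have hP : P ∈ degreeLE ℂ n := by
    rw [← span_image_Iic_eq_degreeLE hdeg]
    simp only [P, ← smul_eq_C_mul]
    exact Submodule.smul_mem _ _ <| Submodule.sum_mem _ fun k hk =>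
      Submodule.smul_mem _ _ <| Submodule.subset_span ⟨k, Finset.mem_range_succ_iff.mp hk, rfl⟩
  have horthP : ∀ q ∈ degreeLE ℂ n, inner ℂ (coeffLp (q * f)) (coeffLp 1 - coeffLp (P * f)) = 0 :=
    fun q => inner_coeffLp_mul_eq_zero_of_mem_degreeLE hdeg fun k hk => by
      rw [hPf_sum]
      exact inner_sub_sum_inner_smul_eq_zero he _ (Finset.mem_range_succ_iff.mpr hk)
  have hpf : coeffLp (p * f) = coeffLp (P * f) := by
    refine eq_of_inner_sub_eq_zero_of_norm_sub_sq_le (𝕜 := ℂ) (x := coeffLp 1) ?_ ?_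
    · rw [← map_sub, ← sub_mul]
      exact horthP _ (sub_mem hP (mem_degreeLE.mpr hp.1))
    · simp only [← map_sub, norm_coeffLp_sq]
      exact hp.2 P (mem_degreeLE.mp hP)
  exact mul_right_cancel₀ hf (coeffLp_injective hpf)
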